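/- arXiv:1206.3422 — 3 statements merged into one kernel-verified Lean document; each statement's English description precedes it below -/
import Mathlib

section
/- For every integer k with 3 ≤ k ≤ p − 1, ln m(k) ≥ ⌊k/3⌋ · ln(p/k). -/
noncomputable section

/-- Predictors for hierarchical model selection with paired interactions:
`K` main effects and `K(K−1)/2` pairwise interactions (unordered pairs of distinct
main effects), so `p = K(K+1)/2` predictors in total. -/
abbrev Predictor (K : ℕ) := Fin K ⊕ {s : Finset (Fin K) // s.card = 2}

/-- A model is admissible iff whenever it contains the interaction of main effects
`i` and `j` it also contains both main effects `i` and `j`. -/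
def IsAdmissibleH {K : ℕ} (M : Finset (Predictor K)) : Prop :=
  ∀ s : {s : Finset (Fin K) // s.card = 2}, Sum.inr s ∈ M → ∀ i ∈ s.1, Sum.inl i ∈ M

/-- `m(k)`: the number of admissible models of size exactly `k`. -/
def mH (K k : ℕ) : ℕ :=
  Set.ncard {M : Finset (Predictor K) | M.card = k ∧ IsAdmissibleH M}

-- Auxiliary lemmas --------------------------------------------------------

/-- Any admissible model can be extended to an admissible model of any larger
admissible size (up to the total number of predictors). -/
lemma exists_extendH (K : ℕ) : ∀ (n : ℕ) (M : Finset (Predictor K)), IsAdmissibleH M →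
    M.card + n ≤ Fintype.card (Predictor K) →
    ∃ M', M ⊆ M' ∧ IsAdmissibleH M' ∧ M'.card = M.card + n := by
  intro n
  induction n with
  | zero => exact fun M h _ => ⟨M, Finset.Subset.refl _, h, rfl⟩
  | succ n ih =>
    intro M hM hcard
    have hlt : M.card < Fintype.card (Predictor K) := by omega
    by_cases hall : ∀ i : Fin K, Sum.inl i ∈ M
    · obtain ⟨x, hx⟩ : ∃ x, x ∉ M := by
        by_contra h
        push_neg at h
        have : M = Finset.univ := Finset.eq_univ_iff_forall.2 h
        rw [this, Finset.card_univ] at hlt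
        omega
      have hM' : IsAdmissibleH (insert x M) := by
        intro s _ i hi
        exact Finset.mem_insert_of_mem (hall i)
      obtain ⟨M', h1, h2, h3⟩ := ih (insert x M) hM'
        (by rw [Finset.card_insert_of_notMem hx]; omega)
      exact ⟨M', (Finset.subset_insert _ _).trans h1, h2,
        by rw [h3, Finset.card_insert_of_notMem hx]; omega⟩
    · push_neg at hall
      obtain ⟨i, hi⟩ := hall
      have hi' : Sum.inl i ∉ M := hi
      have hM' : IsAdmissibleH (insert (Sum.inl i) M) := by
        intro s hs j hj
        rcases Finset.mem_insert.1 hs with h | h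
        · exact absurd h (by simp)
        · exact Finset.mem_insert_of_mem (hM s h j hj)
      obtain ⟨M', h1, h2, h3⟩ := ih _ hM'
        (by rw [Finset.card_insert_of_notMem hi']; omega)
      exact ⟨M', (Finset.subset_insert _ _).trans h1, h2,
        by rw [h3, Finset.card_insert_of_notMem hi']; omega⟩

lemma key_factorH (p k e q t : ℕ) (h1 : k ≤ p) (h2 : p * e ≤ k * q) :
    p * (e - t) ≤ k * (q - t) := by
  rcases Nat.le_total e t with h | h
  · simp [Nat.sub_eq_zero_of_le h]
  · rcases Nat.eq_zero_or_pos k with hk | hk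
    · subst hk
      simp only [Nat.zero_mul, Nat.le_zero] at h2 ⊢
      have : p * (e - t) ≤ p * e := Nat.mul_le_mul_left p (Nat.sub_le e t)
      omega
    · have htq : t ≤ q := by
        by_contra hq
        push_neg at hq
        have hb1 : k * q < k * t := Nat.mul_lt_mul_of_le_of_lt (le_refl k) hq hk
        have hb2 : k * t ≤ p * t := Nat.mul_le_mul_right t h1
        have hb3 : p * t ≤ p * e := Nat.mul_le_mul_left p h
        omega
      have e1 : p * (e - t) + p * t = p * e := by
        rw [← Nat.mul_add, Nat.sub_add_cancel h]
      have e2 : k * (q - t) + k * t = k * q := by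
        rw [← Nat.mul_add, Nat.sub_add_cancel htq]
      have e3 : k * t ≤ p * t := Nat.mul_le_mul_right t h1
      omega

lemma desc_ineqH (p k e q : ℕ) (h1 : k ≤ p) (h2 : p * e ≤ k * q) :
    ∀ t, p ^ t * e.descFactorial t ≤ k ^ t * q.descFactorial t := by
  intro t
  induction t with
  | zero => simp
  | succ t ih =>
    rw [Nat.descFactorial_succ, Nat.descFactorial_succ, pow_succ, pow_succ]
    calc p ^ t * p * ((e - t) * e.descFactorial t)
        = (p * (e - t)) * (p ^ t * e.descFactorial t) := by ring
      _ ≤ (k * (q - t)) * (k ^ t * q.descFactorial t) :=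
          Nat.mul_le_mul (key_factorH p k e q t h1 h2) ih
      _ = k ^ t * k * ((q - t) * q.descFactorial t) := by ring

lemma choose_ineqH (p k e q t : ℕ) (h1 : k ≤ p) (h2 : p * e ≤ k * q) :
    p ^ t * e.choose t ≤ k ^ t * q.choose t := by
  have h := desc_ineqH p k e q h1 h2 t
  rw [Nat.descFactorial_eq_factorial_mul_choose, Nat.descFactorial_eq_factorial_mul_choose] at h
  have := Nat.factorial_pos t
  have h' : t.factorial * (p ^ t * e.choose t) ≤ t.factorial * (k ^ t * q.choose t) := by
    calc t.factorial * (p ^ t * e.choose t) = p ^ t * (t.factorial * e.choose t) := by ring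
      _ ≤ k ^ t * (t.factorial * q.choose t) := h
      _ = t.factorial * (k ^ t * q.choose t) := by ring
  exact Nat.le_of_mul_le_mul_left h' this

lemma arithH (Kn v e k : ℕ) (hve : v + e = k)
    (h2e : 2 * e + v ≤ v * v) (hvK : v ≤ Kn + 2) :
    (Kn + 3) * e ≤ (Kn + 1) * k := by
  have h5 : 2 * k ≤ v * v + v := by omega
  have h6 : v * (v + 1) ≤ v * (Kn + 3) := Nat.mul_le_mul_left v (by omega)
  have h7 : v * (v + 1) = v * v + v := by ring
  have hA' : 2 * k ≤ v * (Kn + 3) := by omega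
  have ha : (Kn + 3) * e + (Kn + 3) * v = (Kn + 3) * k := by
    rw [← hve]; ring
  have hb : 2 * k ≤ (Kn + 3) * v := by rw [Nat.mul_comm (Kn+3) v]; exact hA'
  have hc : (Kn + 3) * k = (Kn + 1) * k + 2 * k := by ring
  omega

lemma arithH' (K v e k : ℕ) (hK : 2 ≤ K) (hve : v + e = k)
    (h2e : 2 * e + v ≤ v * v) (hvK : v ≤ K) :
    (K + 1) * e ≤ (K - 1) * k := by
  obtain ⟨n, rfl⟩ : ∃ n, K = n + 2 := ⟨K - 2, by omega⟩
  have h := arithH n v e k hve h2e hvK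
  have h1 : n + 2 + 1 = n + 3 := by omega
  have h2 : n + 2 - 1 = n + 1 := by omega
  rw [h1, h2]
  exact h

lemma mH_pow_lower (K : ℕ) (hK : 2 ≤ K) (k : ℕ) (h3 : 3 ≤ k)
    (hk : k ≤ K * (K + 1) / 2 - 1) :
    (K * (K + 1) / 2) ^ (k / 3) ≤ mH K k * k ^ (k / 3) := by
  classical
  set t := k / 3 with ht
  set p := K * (K + 1) / 2 with hp
  set q := K * (K - 1) / 2 with hq
  have hp2 : 2 * p = K * (K + 1) := Nat.mul_div_cancel' (Nat.even_mul_succ_self K).two_dvd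
  have hq2 : 2 * q = K * (K - 1) := by
    have hK1 : K - 1 + 1 = K := by omega
    have heven : Even ((K - 1) * (K - 1 + 1)) := Nat.even_mul_succ_self (K - 1)
    rw [hK1, Nat.mul_comm] at heven
    exact Nat.mul_div_cancel' heven.two_dvd
  have hA : 2 * p = K * K + K := by rw [hp2]; ring
  have hB : 2 * q + K = K * K := by
    rw [hq2]
    obtain ⟨n, hn⟩ : ∃ n, K = n + 2 := ⟨K - 2, by omega⟩
    subst hn
    have h2 : n + 2 - 1 = n + 1 := by omega
    rw [h2]; ring
  have hA3 : 2 * K ≤ K * K := Nat.mul_le_mul_right K hK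
  obtain ⟨A, hAe⟩ : ∃ A, A = K * K := ⟨_, rfl⟩
  rw [← hAe] at hA hB hA3
  have cardE : Fintype.card {s : Finset (Fin K) // s.card = 2} = q := by
    rw [Fintype.card_finset_len, Fintype.card_fin, Nat.choose_two_right, ← hq]
  have cardP : Fintype.card (Predictor K) = p := by
    rw [Fintype.card_sum, Fintype.card_fin, cardE]
    omega
  have hkp : k ≤ p - 1 := hk
  have h3t : 3 * t ≤ k := by omega
  set 𝓜 := Finset.univ.filter
    (fun M : Finset (Predictor K) => M.card = k ∧ IsAdmissibleH M) with h𝓜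
  have hmH : mH K k = 𝓜.card := by
    rw [mH]
    have hset : {M : Finset (Predictor K) | M.card = k ∧ IsAdmissibleH M} = ↑𝓜 := by
      ext M
      simp [h𝓜]
    rw [hset, Set.ncard_coe_finset]
  set 𝓟 := Finset.powersetCard t
    (Finset.univ : Finset {s : Finset (Fin K) // s.card = 2}) with h𝓟
  have hPcard : 𝓟.card = q.choose t := by
    rw [h𝓟, Finset.card_powersetCard, Finset.card_univ, cardE]
  -- every t-set of interactions is contained in some admissible model of size k
  have hext : ∀ S ∈ 𝓟, ∃ M ∈ 𝓜, ∀ s ∈ S, Sum.inr s ∈ M := by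
    intro S hS
    obtain ⟨hSsub, hScard⟩ := Finset.mem_powersetCard.1 hS
    set C : Finset (Predictor K) :=
      (S.biUnion fun s => s.1.image Sum.inl) ∪ S.image Sum.inr with hC
    have hCadm : IsAdmissibleH C := by
      intro s hs i hi
      have hsS : s ∈ S := by
        rcases Finset.mem_union.1 hs with h | h
        · exfalso
          obtain ⟨a, _, ha2⟩ := Finset.mem_biUnion.1 h
          obtain ⟨j, _, hj2⟩ := Finset.mem_image.1 ha2
          simp at hj2
        · obtain ⟨a, ha1, ha2⟩ := Finset.mem_image.1 h
          have hax : a = s := by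
            apply Subtype.ext
            have := Sum.inr.inj ha2
            exact congrArg Subtype.val this
          exact hax ▸ ha1
      exact Finset.mem_union_left _
        (Finset.mem_biUnion.2 ⟨s, hsS, Finset.mem_image_of_mem _ hi⟩)
    have hCcard : C.card ≤ k := by
      have h1 : ((S.biUnion fun s => s.1.image Sum.inl : Finset (Predictor K))).card ≤ 2 * t := by
        calc ((S.biUnion fun s => s.1.image Sum.inl : Finset (Predictor K))).card
            ≤ ∑ s ∈ S, ((s.1.image Sum.inl : Finset (Predictor K))).card :=
              Finset.card_biUnion_le
          _ ≤ ∑ _s ∈ S, 2 :=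
              Finset.sum_le_sum (fun s _ => (Finset.card_image_le).trans_eq s.2)
          _ = 2 * t := by rw [Finset.sum_const, hScard, smul_eq_mul, Nat.mul_comm]
      have h2 : ((S.image Sum.inr : Finset (Predictor K))).card ≤ t :=
        Finset.card_image_le.trans_eq hScard
      calc C.card ≤ ((S.biUnion fun s => s.1.image Sum.inl : Finset (Predictor K))).card
            + ((S.image Sum.inr : Finset (Predictor K))).card := by
              rw [hC]; exact Finset.card_union_le _ _
        _ ≤ k := by omega
    obtain ⟨M, hsub, hadm, hcard⟩ := exists_extendH K (k - C.card) C hCadm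
      (by rw [cardP]; omega)
    refine ⟨M, ?_, ?_⟩
    · rw [h𝓜, Finset.mem_filter]
      exact ⟨Finset.mem_univ _, by omega, hadm⟩
    · intro s hs
      exact hsub (Finset.mem_union_right _ (Finset.mem_image_of_mem _ hs))
  have hsubB : 𝓟 ⊆ 𝓜.biUnion (fun M => 𝓟.filter (fun S => ∀ s ∈ S, Sum.inr s ∈ M)) := by
    intro S hS
    obtain ⟨M, hM, hSM⟩ := hext S hS
    exact Finset.mem_biUnion.2 ⟨M, hM, Finset.mem_filter.2 ⟨hS, hSM⟩⟩
  have hcount1 : q.choose t ≤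
      ∑ M ∈ 𝓜, (𝓟.filter (fun S => ∀ s ∈ S, Sum.inr s ∈ M)).card := by
    rw [← hPcard]
    exact (Finset.card_le_card hsubB).trans Finset.card_biUnion_le
  have hfiber : ∀ M ∈ 𝓜,
      (𝓟.filter (fun S => ∀ s ∈ S, Sum.inr s ∈ M)).card ≤ (M.toRight.card).choose t := by
    intro M _
    have hsub : 𝓟.filter (fun S => ∀ s ∈ S, Sum.inr s ∈ M) ⊆
        Finset.powersetCard t M.toRight := by
      intro S hS
      obtain ⟨hS1, hS2⟩ := Finset.mem_filter.1 hS
      obtain ⟨_, hScard⟩ := Finset.mem_powersetCard.1 hS1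
      exact Finset.mem_powersetCard.2
        ⟨fun s hs => Finset.mem_toRight.2 (hS2 s hs), hScard⟩
    calc (𝓟.filter (fun S => ∀ s ∈ S, Sum.inr s ∈ M)).card
        ≤ (Finset.powersetCard t M.toRight).card := Finset.card_le_card hsub
      _ = (M.toRight.card).choose t := by rw [Finset.card_powersetCard]
  have hstruct : ∀ M ∈ 𝓜, p * M.toRight.card ≤ k * q := by
    intro M hM
    rw [h𝓜, Finset.mem_filter] at hM
    obtain ⟨-, hMk, hMadm⟩ := hM
    obtain ⟨v, hv⟩ : ∃ v, M.toLeft.card = v := ⟨_, rfl⟩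
    obtain ⟨e, he⟩ : ∃ e, M.toRight.card = e := ⟨_, rfl⟩
    rw [he]
    have hve : v + e = k := by
      rw [← hv, ← he, Finset.card_toLeft_add_card_toRight (u := M), hMk]
    have hvK : v ≤ K := by
      rw [← hv]
      calc M.toLeft.card ≤ (Finset.univ : Finset (Fin K)).card := Finset.card_le_univ _
        _ = K := by rw [Finset.card_univ, Fintype.card_fin]
    have he2 : e ≤ v.choose 2 := by
      rw [← hv, ← he]
      have hle : M.toRight.card ≤ (Finset.powersetCard 2 M.toLeft).card := by
        apply Finset.card_le_card_of_injOn (fun s => s.1)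
        · intro s hs
          refine Finset.mem_powersetCard.2 ⟨?_, s.2⟩
          intro i hi
          exact Finset.mem_toLeft.2 (hMadm s (Finset.mem_toRight.1 hs) i hi)
        · intro a _ b _ hab
          exact Subtype.ext hab
      rwa [Finset.card_powersetCard] at hle
    have hv1 : 1 ≤ v := by
      by_contra hcon
      push_neg at hcon
      have hvz : v = 0 := by omega
      rw [hvz] at he2
      simp [Nat.choose] at he2
      omega
    have h2e : 2 * e + v ≤ v * v := by
      have hd1 : 2 * (v * (v - 1) / 2) ≤ v * (v - 1) := Nat.mul_div_le _ 2
      have hd2 : e ≤ v * (v - 1) / 2 := by rwa [Nat.choose_two_right] at he2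
      have hd3 : v * (v - 1) + v = v * v := by
        obtain ⟨w, rfl⟩ : ∃ w, v = w + 1 := ⟨v - 1, by omega⟩
        simp only [Nat.add_sub_cancel]
        ring
      omega
    have harith : (K + 1) * e ≤ (K - 1) * k := arithH' K v e k hK hve h2e hvK
    have hfin : 2 * (p * e) ≤ 2 * (k * q) := by
      calc 2 * (p * e) = (2 * p) * e := by ring
        _ = (K * (K + 1)) * e := by rw [hp2]
        _ = K * ((K + 1) * e) := by ring
        _ ≤ K * ((K - 1) * k) := Nat.mul_le_mul_left K harith
        _ = (K * (K - 1)) * k := by ring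
        _ = (2 * q) * k := by rw [hq2]
        _ = 2 * (k * q) := by ring
    omega
  have hchoose : ∀ M ∈ 𝓜,
      p ^ t * ((M.toRight.card).choose t) ≤ k ^ t * q.choose t := fun M hM =>
    choose_ineqH p k _ q t (by omega) (hstruct M hM)
  have hmain : p ^ t * q.choose t ≤ 𝓜.card * (k ^ t * q.choose t) := by
    calc p ^ t * q.choose t
        ≤ p ^ t * ∑ M ∈ 𝓜, (𝓟.filter (fun S => ∀ s ∈ S, Sum.inr s ∈ M)).card :=
          Nat.mul_le_mul_left _ hcount1
      _ = ∑ M ∈ 𝓜, p ^ t * (𝓟.filter (fun S => ∀ s ∈ S, Sum.inr s ∈ M)).card := by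
          rw [Finset.mul_sum]
      _ ≤ ∑ M ∈ 𝓜, k ^ t * q.choose t :=
          Finset.sum_le_sum (fun M hM =>
            le_trans (Nat.mul_le_mul_left _ (hfiber M hM)) (hchoose M hM))
      _ = 𝓜.card * (k ^ t * q.choose t) := by rw [Finset.sum_const, smul_eq_mul]
  have htq : t ≤ q := by omega
  have hqpos : 0 < q.choose t := Nat.choose_pos htq
  have hfinal : p ^ t ≤ 𝓜.card * k ^ t := by
    have h' : (p ^ t) * q.choose t ≤ (𝓜.card * k ^ t) * q.choose t := by
      calc (p ^ t) * q.choose t ≤ 𝓜.card * (k ^ t * q.choose t) := hmain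
        _ = (𝓜.card * k ^ t) * q.choose t := by ring
    exact Nat.le_of_mul_le_mul_right h' hqpos
  rw [hmH]
  exact hfinal

/-- for `3 ≤ k ≤ p − 1`, `ln m(k) ≥ ⌊k/3⌋ ln(p/k)`, where `p = K(K+1)/2`. -/
theorem log_mH_lower_bound (K : ℕ) (hK : 2 ≤ K) (k : ℕ) (h3 : 3 ≤ k)
    (hk : k ≤ K * (K + 1) / 2 - 1) :
    ((k / 3 : ℕ) : ℝ) * Real.log ((K * (K + 1) / 2 : ℕ) / (k : ℝ)) ≤ Real.log (mH K k) := by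
  have hnat := mH_pow_lower K hK k h3 hk
  set t := k / 3 with ht
  set p := K * (K + 1) / 2 with hp
  have hp3 : 3 ≤ p := by
    have h6 : 6 ≤ K * (K + 1) := Nat.mul_le_mul hK (show 3 ≤ K + 1 by omega)
    have := Nat.div_le_div_right (c := 2) h6
    simpa [← hp] using this
  have hkR : (0 : ℝ) < (k : ℝ) := by exact_mod_cast (by omega : 0 < k)
  have hpR : (0 : ℝ) < (p : ℝ) := by exact_mod_cast (by omega : 0 < p)
  have hp0 : 0 < p := by omega
  have hppow : 0 < p ^ t := pow_pos hp0 t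
  have hmpos : 0 < mH K k := by
    rcases Nat.eq_zero_or_pos (mH K k) with h0 | h0
    · rw [h0, Nat.zero_mul] at hnat
      omega
    · exact h0
  have key : ((p : ℝ) / k) ^ t ≤ (mH K k : ℝ) := by
    rw [div_pow, div_le_iff₀ (by positivity)]
    exact_mod_cast hnat
  calc (t : ℝ) * Real.log ((p : ℝ) / k)
      = Real.log (((p : ℝ) / k) ^ t) := (Real.log_pow ((p : ℝ) / k) t).symm
    _ ≤ Real.log (mH K k) := Real.log_le_log (by positivity) key

end
end

section
/- For every integer k with 3 ≤ k ≤ 3K/2, the number of admissible models of size k satisfies m(k) ≥ binomial( K(K−1)/2, ⌊k/3⌋ ). -/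
noncomputable section

/-!
A model is determined by its main effects `V` and its interactions `S`, and it is
admissible as soon as `V` covers the `≤ 2 #S` main effects occurring in `S`. So for
`2t ≤ n ≤ K` every set of `t` interactions extends to an admissible model with `n` main
effects, and sending a model to its set of interactions is a surjection from the admissible
models of size `n + t` onto the `t`-subsets of the `K(K-1)/2` interactions. For `k ≤ 3K/2`
take `t = ⌊k/3⌋` and `n = k - t`.
-/

open Finset

namespace Predictor

variable {K : ℕ}

lemma card_interaction : Fintype.card {s : Finset (Fin K) // s.card = 2} = K * (K - 1) / 2 := by
  rw [Fintype.card_finset_len, Fintype.card_fin, Nat.choose_two_right]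

lemma card_biUnion_interaction_le (S : Finset {s : Finset (Fin K) // s.card = 2}) :
    #(S.biUnion Subtype.val) ≤ 2 * #S := by
  rw [mul_comm]
  exact card_biUnion_le_card_mul S _ 2 fun s _ => s.2.le

end Predictor

open Predictor

lemma isAdmissibleH_disjSum {K : ℕ} {V : Finset (Fin K)}
    {S : Finset {s : Finset (Fin K) // s.card = 2}} (hSV : S.biUnion Subtype.val ⊆ V) :
    IsAdmissibleH (V.disjSum S) := by
  intro s hs i hi
  rw [inr_mem_disjSum] at hs
  exact inl_mem_disjSum.2 (hSV (mem_biUnion.2 ⟨s, hs, hi⟩))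

lemma mH_eq_card (K k : ℕ) [DecidablePred (IsAdmissibleH (K := K))] :
    mH K k = #{M : Finset (Predictor K) | #M = k ∧ IsAdmissibleH M} := by
  rw [mH, ← Set.ncard_coe_finset, coe_filter]
  simp only [mem_univ, true_and]

lemma choose_le_mH {K n t : ℕ} (htn : 2 * t ≤ n) (hnK : n ≤ K) :
    (K * (K - 1) / 2).choose t ≤ mH K (n + t) := by
  classical
  rw [mH_eq_card, ← card_interaction, ← card_univ, ← card_powersetCard]
  refine card_le_card_of_surjOn toRight fun S hS => ?_
  rw [mem_coe, mem_powersetCard] at hS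
  obtain ⟨V, hSV, hV⟩ := exists_superset_card_eq
    ((card_biUnion_interaction_le S).trans (hS.2 ▸ htn)) (by simpa using hnK)
  refine ⟨V.disjSum S, ?_, toRight_disjSum⟩
  simp only [coe_filter, mem_univ, true_and, Set.mem_ofPred_eq, card_disjSum, hV, hS.2]
  exact isAdmissibleH_disjSum hSV

theorem mH_lower_bound_small_general (K : ℕ) (k : ℕ)
    (hk : 2 * k ≤ 3 * K) :
    (K * (K - 1) / 2).choose (k / 3) ≤ mH K k := by
  have hsplit : k - k / 3 + k / 3 = k := by omega
  have hk' : k - k / 3 ≤ K := by omega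
  simpa only [hsplit] using choose_le_mH (n := k - k / 3) (t := k / 3) (by omega) hk'

/-- for `3 ≤ k ≤ 3K/2`, `m(k) ≥ binomial(K(K−1)/2, ⌊k/3⌋)`. -/
theorem mH_lower_bound_small (K : ℕ) (hK : 2 ≤ K) (k : ℕ) (h3 : 3 ≤ k)
    (hk : 2 * k ≤ 3 * K) :
    (K * (K - 1) / 2).choose (k / 3) ≤ mH K k :=
  mH_lower_bound_small_general K k hk

end
end

section
/- Suppose there is a constant c > 0 such that for every k with 1 ≤ k ≤ r and m(k) > 0 the prior satisfies min{ m(k)^{-c}, e^{-c k} } ≤ π(k) ≤ m(k) e^{-c(γ) k}. Then there exist constants C₁ > 0 depending only on γ and C₃ > 0 depending only on γ and c such that for every such k: C₁ σ² k ≤ Pen(k) ≤ C₃ σ² max{ ln m(k), k }. -/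
open NNReal

noncomputable section

/-- The complexity penalty `Pen(k) = 2σ²(1+1/γ) ln( m(k) π(k)⁻¹ (1+γ)^{k/2} )`. -/
def Pen (σ : ℝ≥0) (γ : ℝ) (mk : ℕ) (πk : ℝ) (k : ℕ) : ℝ :=
  2 * (σ : ℝ) ^ 2 * (1 + 1 / γ) *
    Real.log ((mk : ℝ) * πk⁻¹ * (1 + γ) ^ ((k : ℝ) / 2))

/-- `c(γ) = 8(γ+3/4)²`. -/
def cGamma (γ : ℝ) : ℝ := 8 * (γ + 3 / 4) ^ 2

/-- bounds on the complexity penalty: `C₁ σ² k ≤ Pen(k) ≤ C₃ σ² max(ln m(k), k)`,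
with `C₁` depending only on `γ` and `C₃` only on `γ` and `c`. -/
theorem pen_bounds (γ : ℝ) (hγ : 0 < γ) :
    ∃ C₁ : ℝ, 0 < C₁ ∧
      ∀ c : ℝ, 0 < c →
      ∃ C₃ : ℝ, 0 < C₃ ∧
        ∀ r : ℕ, 1 ≤ r →
        ∀ σ : ℝ≥0, 0 < σ →
        ∀ m : ℕ → ℕ, m 0 = 1 → m r = 1 →
        ∀ π : ℕ → ℝ, (∀ k, 0 ≤ π k) → (∑ k ∈ Finset.range (r + 1), π k = 1) →
          (∀ k ≤ r, (0 < π k ↔ 0 < m k)) →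
          (∀ k, 1 ≤ k → k ≤ r → 0 < m k →
            min ((m k : ℝ) ^ (-c)) (Real.exp (-(c * k))) ≤ π k ∧
              π k ≤ (m k : ℝ) * Real.exp (-(cGamma γ * k))) →
        ∀ k, 1 ≤ k → k ≤ r → 0 < m k →
          C₁ * (σ : ℝ) ^ 2 * k ≤ Pen σ γ (m k) (π k) k ∧
          Pen σ γ (m k) (π k) k ≤ C₃ * (σ : ℝ) ^ 2 * max (Real.log (m k)) (k : ℝ) := by
  have h1γ : (0:ℝ) < 1 + 1/γ := by positivity
  have hcγ : 0 < cGamma γ := by unfold cGamma; positivity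
  have hlog1γ : 0 < Real.log (1 + γ) := Real.log_pos (by linarith)
  refine ⟨2 * (1 + 1/γ) * cGamma γ, by positivity, ?_⟩
  intro c hc
  refine ⟨2 * (1 + 1/γ) * (1 + c + Real.log (1 + γ) / 2), by positivity, ?_⟩
  intro r hr σ hσ m hm0 hmr π hπ0 hπsum hπiff hbound k hk1 hkr hmk
  obtain ⟨hlo, hhi⟩ := hbound k hk1 hkr hmk
  have hmkR : (1:ℝ) ≤ (m k : ℝ) := by exact_mod_cast hmk
  have hmkpos : (0:ℝ) < m k := by linarith
  have hk1R : (1:ℝ) ≤ (k:ℝ) := by exact_mod_cast hk1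
  have hπpos : 0 < π k :=
    lt_of_lt_of_le (lt_min (Real.rpow_pos_of_pos hmkpos _) (Real.exp_pos _)) hlo
  have hlogm0 : 0 ≤ Real.log (m k) := Real.log_nonneg hmkR
  have hpow : Real.log ((1+γ) ^ ((k:ℝ)/2)) = (k:ℝ)/2 * Real.log (1+γ) :=
    Real.log_rpow (by linarith) _
  have hL : Real.log ((m k : ℝ) * (π k)⁻¹ * (1+γ) ^ ((k:ℝ)/2))
      = Real.log (m k) - Real.log (π k) + (k:ℝ)/2 * Real.log (1+γ) := by
    rw [Real.log_mul (by positivity) (by positivity),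
      Real.log_mul (by positivity) (by positivity), Real.log_inv, hpow]
    ring
  have hA : (0:ℝ) ≤ 2 * (σ:ℝ)^2 * (1 + 1/γ) := by positivity
  constructor
  · -- lower bound
    have hlogπ_le : Real.log (π k) ≤ Real.log (m k) - cGamma γ * k := by
      have h := Real.log_le_log hπpos hhi
      rwa [Real.log_mul (by positivity) (Real.exp_ne_zero _), Real.log_exp,
        ← sub_eq_add_neg] at h
    have hL_ge : cGamma γ * k ≤ Real.log ((m k : ℝ) * (π k)⁻¹ * (1+γ) ^ ((k:ℝ)/2)) := by
      rw [hL]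
      have hnn : 0 ≤ (k:ℝ)/2 * Real.log (1+γ) := by positivity
      linarith
    unfold Pen
    calc 2 * (1 + 1/γ) * cGamma γ * (σ:ℝ)^2 * k
        = 2 * (σ:ℝ)^2 * (1 + 1/γ) * (cGamma γ * k) := by ring
      _ ≤ 2 * (σ:ℝ)^2 * (1 + 1/γ) * Real.log ((m k : ℝ) * (π k)⁻¹ * (1+γ) ^ ((k:ℝ)/2)) :=
          mul_le_mul_of_nonneg_left hL_ge hA
  · -- upper bound
    set M := max (Real.log (m k)) (k:ℝ) with hM
    have hMk : (k:ℝ) ≤ M := le_max_right _ _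
    have hMm : Real.log (m k) ≤ M := le_max_left _ _
    have hM1 : (1:ℝ) ≤ M := le_trans hk1R hMk
    have hexp_le : Real.exp (-(c*M)) ≤ π k := by
      refine le_trans (le_min ?_ ?_) hlo
      · rw [Real.rpow_def_of_pos hmkpos]
        apply Real.exp_le_exp.mpr
        nlinarith
      · apply Real.exp_le_exp.mpr
        nlinarith
    have hneglogπ : -Real.log (π k) ≤ c * M := by
      have h := (Real.le_log_iff_exp_le hπpos).mpr hexp_le
      linarith
    have hLle : Real.log ((m k : ℝ) * (π k)⁻¹ * (1+γ) ^ ((k:ℝ)/2))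
        ≤ (1 + c + Real.log (1+γ)/2) * M := by
      rw [hL]
      have h1 : (k:ℝ)/2 * Real.log (1+γ) ≤ M * (Real.log (1+γ)/2) := by nlinarith
      nlinarith
    unfold Pen
    calc 2 * (σ:ℝ)^2 * (1 + 1/γ) * Real.log ((m k : ℝ) * (π k)⁻¹ * (1+γ) ^ ((k:ℝ)/2))
        ≤ 2 * (σ:ℝ)^2 * (1 + 1/γ) * ((1 + c + Real.log (1+γ)/2) * M) :=
          mul_le_mul_of_nonneg_left hLle hA
      _ = 2 * (1 + 1/γ) * (1 + c + Real.log (1+γ)/2) * (σ:ℝ)^2 * M := by ring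

end
end
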